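/- Let f : Ω → ℝ be convex on an open convex set Ω ⊆ ℝⁿ and x̄ ∈ Ω. Then the reachable gradient set ∂*f(x̄) = { lim ∇f(xₖ) : xₖ → x̄, f differentiable at xₖ } is a nonempty compact subset of ℝⁿ, contained in ∂f(x̄). -/
import Mathlib

open scoped RealInnerProductSpace
open Filter

section Aux

open Set Metric MeasureTheory Topology

variable {E : Type*} [NormedAddCommGroup E] [InnerProductSpace ℝ E]

/-- Gradient inequality (fderiv form) for convex functions at differentiability points. -/
lemma my_grad_ineq {Ω : Set E} {f : E → ℝ} (hf : ConvexOn ℝ Ω f) {x y : E}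
    (hx : x ∈ Ω) (hy : y ∈ Ω) (hd : DifferentiableAt ℝ f x) :
    fderiv ℝ f x (y - x) ≤ f y - f x := by
  set φ := fderiv ℝ f x with hφ
  have hc : HasDerivAt (fun t : ℝ => x + t • (y - x)) (y - x) 0 := by
    simpa using ((hasDerivAt_id (0 : ℝ)).smul_const (y - x)).const_add x
  have h0 : x + (0 : ℝ) • (y - x) = x := by simp
  have hg : HasDerivAt (fun t : ℝ => f (x + t • (y - x))) (φ (y - x)) 0 := by
    exact HasFDerivAt.comp_hasDerivAt 0 (by rw [h0]; exact hd.hasFDerivAt) hc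
  have hslope : Tendsto (slope (fun t : ℝ => f (x + t • (y - x))) 0) (𝓝[>] 0)
      (𝓝 (φ (y - x))) :=
    (hasDerivAt_iff_tendsto_slope.1 hg).mono_left
      (nhdsWithin_mono _ (fun t ht => ne_of_gt ht))
  refine le_of_tendsto hslope ?_
  filter_upwards [Ioc_mem_nhdsGT (zero_lt_one)] with t ht
  have hxy : (1 - t) • x + t • y = x + t • (y - x) := by module
  have hle : f (x + t • (y - x)) ≤ (1 - t) * f x + t * f y := by
    have h := hf.2 hx hy (sub_nonneg.2 ht.2) ht.1.le (by ring)
    rwa [hxy] at h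
  have hslope_eq : slope (fun t : ℝ => f (x + t • (y - x))) 0 t
      = (f (x + t • (y - x)) - f x) / t := by
    rw [slope_def_field]; simp [h0]
  rw [hslope_eq, div_le_iff₀ ht.1]
  nlinarith [ht.1, hle]

/-- Gradient inequality (inner product form). -/
lemma my_grad_ineq_inner [CompleteSpace E] {Ω : Set E} {f : E → ℝ} (hf : ConvexOn ℝ Ω f)
    {x y : E} (hx : x ∈ Ω) (hy : y ∈ Ω) (hd : DifferentiableAt ℝ f x) :
    ⟪gradient f x, y - x⟫ ≤ f y - f x := by
  have h : ⟪gradient f x, y - x⟫ = fderiv ℝ f x (y - x) :=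
    InnerProductSpace.toDual_symm_apply
  rw [h]
  exact my_grad_ineq hf hx hy hd

lemma my_norm_gradient [CompleteSpace E] (f : E → ℝ) (x : E) :
    ‖gradient f x‖ = ‖fderiv ℝ f x‖ :=
  LinearIsometryEquiv.norm_map (InnerProductSpace.toDual ℝ E).symm _

end Aux

/-- The reachable gradient set of a convex function at a point. -/
def reachableGradient {n : ℕ} (f : EuclideanSpace ℝ (Fin n) → ℝ)
    (Ω : Set (EuclideanSpace ℝ (Fin n))) (x₀ : EuclideanSpace ℝ (Fin n)) :
    Set (EuclideanSpace ℝ (Fin n)) :=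
  {v | ∃ xs : ℕ → EuclideanSpace ℝ (Fin n),
      (∀ k, xs k ∈ Ω ∧ DifferentiableAt ℝ f (xs k)) ∧
      Tendsto xs atTop (nhds x₀) ∧
      Tendsto (fun k => gradient f (xs k)) atTop (nhds v)}

/-- The reachable gradient of a convex function is nonempty, compact and contained in
the subdifferential. -/
theorem stmt_10 {n : ℕ} (Ω : Set (EuclideanSpace ℝ (Fin n))) (hΩo : IsOpen Ω)
    (hΩc : Convex ℝ Ω) (f : EuclideanSpace ℝ (Fin n) → ℝ) (hf : ConvexOn ℝ Ω f)
    (x₀ : EuclideanSpace ℝ (Fin n)) (hx : x₀ ∈ Ω) :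
    (reachableGradient f Ω x₀).Nonempty ∧ IsCompact (reachableGradient f Ω x₀) ∧
      reachableGradient f Ω x₀ ⊆
        {v : EuclideanSpace ℝ (Fin n) | ∀ x ∈ Ω, f x - f x₀ ≥ ⟪v, x - x₀⟫} := by
  classical
  open Set Metric MeasureTheory Topology in
  -- local Lipschitz ball
  obtain ⟨K, t, ht, hK⟩ := (hf.locallyLipschitzOn hΩo) hx
  rw [hΩo.nhdsWithin_eq hx] at ht
  obtain ⟨r, hr0, hrt⟩ := Metric.mem_nhds_iff.1 (Filter.inter_mem ht (hΩo.mem_nhds hx))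
  set B := Metric.ball x₀ r with hB
  have hKB : LipschitzOnWith K f B := hK.mono (hrt.trans Set.inter_subset_left)
  have hBΩ : B ⊆ Ω := hrt.trans Set.inter_subset_right
  -- differentiability points are dense in B
  have hdiff : ∀ (c : EuclideanSpace ℝ (Fin n)) (δ : ℝ), 0 < δ → Metric.ball c δ ⊆ B →
      ∃ z ∈ Metric.ball c δ, DifferentiableAt ℝ f z := by
    intro c δ hδ hsubB
    have hae := hKB.ae_differentiableWithinAt_of_mem (μ := volume)
    by_contra hcon
    push_neg at hcon
    have hsub0 : Metric.ball c δ ⊆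
        {z | ¬ (z ∈ B → DifferentiableWithinAt ℝ f B z)} := by
      intro z hz
      simp only [Set.mem_setOf_eq, Classical.not_imp]
      exact ⟨hsubB hz, fun hdw => hcon z hz
        (hdw.differentiableAt (Metric.isOpen_ball.mem_nhds (hsubB hz)))⟩
    have h0 : volume (Metric.ball c δ) = 0 :=
      measure_mono_null hsub0 (ae_iff.1 hae)
    exact (measure_ball_pos volume c hδ).ne' h0
  -- gradient bound on B
  have hgb : ∀ z ∈ B, ‖gradient f z‖ ≤ K := by
    intro z hz
    rw [my_norm_gradient]
    exact norm_fderiv_le_of_lipschitzOn ℝ (Metric.isOpen_ball.mem_nhds hz) hKB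
  have honediv : Tendsto (fun k : ℕ => 1 / ((k : ℝ) + 1)) atTop (𝓝 0) :=
    tendsto_one_div_add_atTop_nhds_zero_nat
  -- nonemptiness
  have hne : (reachableGradient f Ω x₀).Nonempty := by
    have hxs : ∀ k : ℕ, ∃ z, z ∈ Metric.ball x₀ (min r (1 / (k + 1))) ∧
        DifferentiableAt ℝ f z := by
      intro k
      have hδ : 0 < min r (1 / ((k : ℝ) + 1)) := lt_min hr0 (by positivity)
      obtain ⟨z, hz, hd⟩ := hdiff x₀ _ hδ (Metric.ball_subset_ball (min_le_left _ _))
      exact ⟨z, hz, hd⟩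
    choose xs hxsB hxsd using hxs
    have hxsB' : ∀ k, xs k ∈ B := fun k =>
      Metric.ball_subset_ball (min_le_left _ _) (hxsB k)
    have hxst : Tendsto xs atTop (𝓝 x₀) := by
      rw [tendsto_iff_dist_tendsto_zero]
      exact squeeze_zero (fun _ => dist_nonneg)
        (fun k => ((Metric.mem_ball.1 (hxsB k)).le.trans (min_le_right _ _))) honediv
    have hmem : ∀ k, gradient f (xs k) ∈ Metric.closedBall (0 : EuclideanSpace ℝ (Fin n)) K := by
      intro k
      rw [Metric.mem_closedBall, dist_zero_right]
      exact hgb _ (hxsB' k)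
    obtain ⟨v, _, φ, hφ, hφt⟩ :=
      tendsto_subseq_of_bounded Metric.isBounded_closedBall hmem
    exact ⟨v, xs ∘ φ, fun k => ⟨hBΩ (hxsB' (φ k)), hxsd (φ k)⟩,
      hxst.comp hφ.tendsto_atTop, hφt⟩
  -- contained in subdifferential
  have hsubdiff : reachableGradient f Ω x₀ ⊆
      {v : EuclideanSpace ℝ (Fin n) | ∀ x ∈ Ω, f x - f x₀ ≥ ⟪v, x - x₀⟫} := by
    rintro v ⟨ys, hys, hyst, hygt⟩ x hxΩ
    have hfc : ContinuousAt f x₀ := (hf.continuousOn hΩo).continuousAt (hΩo.mem_nhds hx)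
    have h1 : Tendsto (fun k => (⟪gradient f (ys k), x - ys k⟫ : ℝ)) atTop
        (𝓝 ⟪v, x - x₀⟫) := hygt.inner (tendsto_const_nhds.sub hyst)
    have h2 : Tendsto (fun k => f x - f (ys k)) atTop (𝓝 (f x - f x₀)) :=
      tendsto_const_nhds.sub (hfc.tendsto.comp hyst)
    exact le_of_tendsto_of_tendsto' h1 h2
      (fun k => my_grad_ineq_inner hf (hys k).1 hxΩ (hys k).2)
  -- bounded
  have hbdd : reachableGradient f Ω x₀ ⊆ Metric.closedBall (0 : EuclideanSpace ℝ (Fin n)) K := by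
    rintro v ⟨ys, hys, hyst, hygt⟩
    rw [Metric.mem_closedBall, dist_zero_right]
    refine le_of_tendsto hygt.norm ?_
    filter_upwards [hyst (Metric.isOpen_ball.mem_nhds (Metric.mem_ball_self hr0))] with k hk
    exact hgb _ hk
  -- closed
  have hclosed : IsClosed (reachableGradient f Ω x₀) := by
    refine IsSeqClosed.isClosed ?_
    intro u v hu huv
    have hsel : ∀ j : ℕ, ∃ z, (z ∈ Ω ∧ DifferentiableAt ℝ f z) ∧
        dist z x₀ < 1 / (j + 1) ∧ dist (gradient f z) (u j) < 1 / (j + 1) := by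
      intro j
      obtain ⟨ys, hys, hyst, hygt⟩ := hu j
      have hpos : (0 : ℝ) < 1 / ((j : ℝ) + 1) := by positivity
      have h1 : ∀ᶠ k in atTop, ys k ∈ Metric.ball x₀ (1 / (j + 1)) :=
        hyst (Metric.ball_mem_nhds _ hpos)
      have h2 : ∀ᶠ k in atTop, gradient f (ys k) ∈ Metric.ball (u j) (1 / (j + 1)) :=
        hygt (Metric.ball_mem_nhds _ hpos)
      obtain ⟨k, hk1, hk2⟩ := (h1.and h2).exists
      exact ⟨ys k, hys k, Metric.mem_ball.1 hk1, Metric.mem_ball.1 hk2⟩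
    choose zs hz hzx hzg using hsel
    refine ⟨zs, hz, ?_, ?_⟩
    · rw [tendsto_iff_dist_tendsto_zero]
      exact squeeze_zero (fun _ => dist_nonneg) (fun j => (hzx j).le) honediv
    · rw [tendsto_iff_dist_tendsto_zero]
      have hb : ∀ j, dist (gradient f (zs j)) v ≤ 1 / (j + 1) + dist (u j) v := fun j =>
        (dist_triangle _ (u j) v).trans (add_le_add (hzg j).le le_rfl)
      have hlim : Tendsto (fun j : ℕ => 1 / ((j : ℝ) + 1) + dist (u j) v) atTop (𝓝 0) := by
        simpa using honediv.add (tendsto_iff_dist_tendsto_zero.1 huv)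
      exact squeeze_zero (fun _ => dist_nonneg) hb hlim
  exact ⟨hne, Metric.isCompact_of_isClosed_isBounded hclosed
    (Metric.isBounded_closedBall.subset hbdd), hsubdiff⟩
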